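/- Let Ω > 0, g ∈ PW_Ω, T > 0 and N ∈ ℕ. Define the samples γ[k] = g(kT) for k ∈ ℤ. Then the N-th forward differences satisfy sup_{k ∈ ℤ} |(Δ^N γ)[k]| ≤ (TΩe)^N · sup_{t ∈ ℝ} |g(t)|, where e is Euler's number. -/

import Mathlib

open MeasureTheory Real

/-- Membership in the Paley–Wiener space `PW_Ω`: `g(t) = ∫_{−Ω}^{Ω} φ(ω) e^{iωt} dω`
for some square-integrable `φ : [−Ω,Ω] → ℂ`. -/
def IsPW (Ω : ℝ) (g : ℝ → ℝ) : Prop :=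
  ∃ φ : ℝ → ℂ, MemLp φ 2 (volume.restrict (Set.Icc (-Ω) Ω)) ∧
    ∀ t : ℝ, (g t : ℂ) =
      ∫ ω in Set.Icc (-Ω) Ω, φ ω * Complex.exp (Complex.I * (ω : ℂ) * (t : ℂ))

/-- The forward difference operator `(Δa)[k] = a[k+1] − a[k]` on sequences. -/
def fdiff (a : ℤ → ℝ) : ℤ → ℝ := fun k => a (k + 1) - a k

/-!
`g` is the restriction to `ℝ` of the entire function `G z = ∫ φ(ω) e^{iωz} dω`, which grows at
most like `e^{Ω |Im z|}`. By Phragmén–Lindelöf the constant in front of this growth can be taken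
to be `M = sup |g|`, and Cauchy's estimate on a circle of radius `N / Ω` then bounds the `N`-th
derivative on `ℝ` by `N! M e^N (Ω / N)^N ≤ (Ω e)^N M`. Finally, the `N`-th difference with step
`T` of a function is at most `T^N` times the sup of its `N`-th derivative, by the mean value
theorem applied `N` times.
-/

open Complex (I)
open scoped Complex

section fwdDiff

variable {M M' G G' : Type*} [AddCommMonoid M] [AddCommMonoid M'] [AddCommGroup G]
  [AddCommGroup G']

theorem fwdDiff_iter_comp_addMonoidHom (φ : M →+ M') (f : M' → G) (h : M) (n : ℕ) (y : M) :
    (fwdDiff h)^[n] (f ∘ φ) y = (fwdDiff (φ h))^[n] f (φ y) := by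
  simp [fwdDiff_iter_eq_sum_shift, map_nsmul]

theorem fwdDiff_iter_addMonoidHom_comp (ψ : G →+ G') (f : M → G) (h : M) (n : ℕ) (y : M) :
    (fwdDiff h)^[n] (ψ ∘ f) y = ψ ((fwdDiff h)^[n] f y) := by
  simp [fwdDiff_iter_eq_sum_shift, map_zsmul]

end fwdDiff

theorem norm_fwdDiff_iter_le_of_norm_iteratedDeriv_le {E : Type*} [NormedAddCommGroup E]
    [NormedSpace ℝ E] {T : ℝ} (hT : 0 ≤ T) {n : ℕ} {F : ℝ → E} (hF : ContDiff ℝ n F) {D : ℝ}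
    (hD : ∀ x, ‖iteratedDeriv n F x‖ ≤ D) (x : ℝ) : ‖(fwdDiff T)^[n] F x‖ ≤ T ^ n * D := by
  induction n generalizing F D with
  | zero => simpa using hD x
  | succ n ih =>
    have hF_n : ContDiff ℝ n F := hF.of_le (by exact_mod_cast n.le_succ)
    have hshift : ContDiff ℝ n fun y => F (y + T) := hF_n.comp (contDiff_id.add contDiff_const)
    have hdiff : ∀ y, iteratedDeriv n (fwdDiff T F) y =
        iteratedDeriv n F (y + T) - iteratedDeriv n F y := fun y => by
      rw [show fwdDiff T F = (fun y => F (y + T)) - F from rfl,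
        iteratedDeriv_sub hshift.contDiffAt hF_n.contDiffAt, iteratedDeriv_comp_add_const]
    have hmvt : ∀ y, ‖iteratedDeriv n (fwdDiff T F) y‖ ≤ T * D := fun y => by
      have hd := hF.differentiable_iteratedDeriv n (by exact_mod_cast n.lt_succ_self)
      rw [hdiff]
      calc ‖iteratedDeriv n F (y + T) - iteratedDeriv n F y‖ ≤ D * ‖y + T - y‖ :=
            convex_univ.norm_image_sub_le_of_norm_deriv_le (fun z _ => hd z)
              (fun z _ => by simpa [← iteratedDeriv_succ] using hD z) trivial trivial
        _ = T * D := by rw [add_sub_cancel_left, norm_of_nonneg hT, mul_comm]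
    have hΔ : ContDiff ℝ n (fwdDiff T F) := hshift.sub hF_n
    rw [Function.iterate_succ_apply, pow_succ, mul_assoc]
    exact ih hΔ hmvt

section FourierExtension

variable {μ : Measure ℝ} {φ : ℝ → ℂ} {Ω : ℝ}

noncomputable def fourierExtension (μ : Measure ℝ) (φ : ℝ → ℂ) (z : ℂ) : ℂ :=
  ∫ ω, φ ω * cexp (I * ω * z) ∂μ

theorem norm_cexp_I_mul_ofReal_mul_le (ω : ℝ) (z : ℂ) :
    ‖cexp (I * ω * z)‖ ≤ Real.exp (|ω| * |z.im|) := by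
  rw [Complex.norm_exp, ← abs_mul]
  gcongr
  simpa [Complex.mul_re] using neg_le_abs (ω * z.im)

theorem norm_fourierExtension_le (hφ : Integrable φ μ) (hsupp : ∀ᵐ ω ∂μ, |ω| ≤ Ω) (z : ℂ) :
    ‖fourierExtension μ φ z‖ ≤ (∫ ω, ‖φ ω‖ ∂μ) * Real.exp (Ω * |z.im|) := by
  rw [← integral_mul_const]
  refine norm_integral_le_of_norm_le (hφ.norm.mul_const _) ?_
  filter_upwards [hsupp] with ω hω
  rw [norm_mul]
  gcongr
  exact (norm_cexp_I_mul_ofReal_mul_le ω z).trans (by gcongr)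

theorem differentiable_fourierExtension (hφ : Integrable φ μ) (hsupp : ∀ᵐ ω ∂μ, |ω| ≤ Ω) :
    Differentiable ℂ (fourierExtension μ φ) := by
  intro z₀
  have hmeas : ∀ z : ℂ, AEStronglyMeasurable (fun ω : ℝ => φ ω * cexp (I * ω * z)) μ :=
    fun z => hφ.aestronglyMeasurable.mul (by fun_prop : Continuous _).aestronglyMeasurable
  set C := Ω * Real.exp (Ω * (|z₀.im| + 1))
  have hdom : ∀ᵐ ω ∂μ, ∀ z ∈ Metric.ball z₀ 1,
      ‖φ ω * (cexp (I * ω * z) * (I * ω))‖ ≤ ‖φ ω‖ * C := by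
    filter_upwards [hsupp] with ω hω z hz
    have him : |z.im| ≤ |z₀.im| + 1 := by
      have := (Complex.abs_im_le_norm (z - z₀)).trans (mem_ball_iff_norm.1 hz).le
      rw [Complex.sub_im] at this
      linarith [abs_sub_abs_le_abs_sub z.im z₀.im]
    have hexp : ‖cexp (I * ω * z)‖ ≤ Real.exp (Ω * (|z₀.im| + 1)) :=
      (norm_cexp_I_mul_ofReal_mul_le ω z).trans <| Real.exp_le_exp.2 <|
        mul_le_mul hω him (abs_nonneg _) ((abs_nonneg ω).trans hω)
    rw [norm_mul, norm_mul, norm_mul, Complex.norm_I, one_mul, Complex.norm_real,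
      Real.norm_eq_abs, mul_comm _ |ω|]
    gcongr
    exact mul_le_mul hω hexp (norm_nonneg _) ((abs_nonneg ω).trans hω)
  have hderiv := hasDerivAt_integral_of_dominated_loc_of_deriv_le
    (Metric.ball_mem_nhds z₀ one_pos) (.of_forall hmeas)
    ((hφ.norm.mul_const (Real.exp (Ω * |z₀.im|))).mono' (hmeas z₀) ?_)
    (hφ.aestronglyMeasurable.mul (by fun_prop : Continuous _).aestronglyMeasurable)
    hdom (hφ.norm.mul_const C)
    (.of_forall fun ω z _ => by
      simpa using (((hasDerivAt_id z).const_mul (I * ω)).cexp).const_mul (φ ω))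
  · exact hderiv.2.differentiableAt
  · filter_upwards [hsupp] with ω hω
    rw [norm_mul]
    gcongr
    exact (norm_cexp_I_mul_ofReal_mul_le ω z₀).trans (by gcongr)

end FourierExtension

section Growth

variable {E : Type*} [NormedAddCommGroup E] [NormedSpace ℂ E]

-- Phragmén–Lindelöf applied to `w ↦ exp (-Ω w) • f (I w)` on the right half-plane.
theorem norm_le_mul_exp_im_of_upperHalfPlane {f : ℂ → E} (hf : Differentiable ℂ f) {A M Ω : ℝ}
    (hA : ∀ z : ℂ, 0 ≤ z.im → ‖f z‖ ≤ A * Real.exp (Ω * z.im)) (hM : ∀ t : ℝ, ‖f t‖ ≤ M)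
    {z : ℂ} (hz : 0 ≤ z.im) : ‖f z‖ ≤ M * Real.exp (Ω * z.im) := by
  set u : ℂ → E := fun w => cexp (-Ω * w) • f (I * w)
  have hu_norm : ∀ w, ‖u w‖ = Real.exp (-(Ω * w.re)) * ‖f (I * w)‖ := fun w => by
    simp [u, norm_smul, Complex.norm_exp]
  have hu_le : ∀ w : ℂ, 0 ≤ w.re → ‖u w‖ ≤ A := fun w hw => by
    have := hA (I * w) (by simpa using hw)
    simp only [Complex.mul_im, Complex.I_re, Complex.I_im, zero_mul, one_mul, zero_add] at this
    rw [hu_norm]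
    calc Real.exp (-(Ω * w.re)) * ‖f (I * w)‖
        ≤ Real.exp (-(Ω * w.re)) * (A * Real.exp (Ω * w.re)) := by gcongr
      _ = A := by rw [mul_left_comm, ← Real.exp_add, neg_add_cancel, Real.exp_zero, mul_one]
  have hPL := PhragmenLindelof.right_half_plane_of_bounded_on_real (f := u) (C := M)
    (z := -I * z) (Differentiable.diffContOnCl <| by fun_prop)
    ⟨0, two_pos, 0, .of_bound A <| Filter.eventually_inf_principal.2 <|
      .of_forall fun w hw => by simpa using hu_le w (le_of_lt hw)⟩
    ⟨A, Filter.eventually_map.2 <| (Filter.eventually_ge_atTop 0).mono fun x hx =>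
      hu_le x (by simpa using hx)⟩
    (fun x => by
      rw [hu_norm, show I * (x * I) = ((-x : ℝ) : ℂ) by push_cast; ring_nf; simp]
      simpa using hM (-x))
    (by simpa using hz)
  rw [hu_norm, show I * (-I * z) = z by ring_nf; simp] at hPL
  simp only [neg_mul, Complex.mul_re, Complex.I_re, Complex.I_im, Complex.neg_re, zero_mul,
    one_mul, zero_sub, neg_neg] at hPL
  rw [Real.exp_neg, inv_mul_le_iff₀ (Real.exp_pos _)] at hPL
  linarith

theorem norm_le_mul_exp_abs_im {f : ℂ → E} (hf : Differentiable ℂ f) {A M Ω : ℝ}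
    (hA : ∀ z : ℂ, ‖f z‖ ≤ A * Real.exp (Ω * |z.im|)) (hM : ∀ t : ℝ, ‖f t‖ ≤ M) (z : ℂ) :
    ‖f z‖ ≤ M * Real.exp (Ω * |z.im|) := by
  rcases le_total 0 z.im with hz | hz
  · rw [abs_of_nonneg hz]
    exact norm_le_mul_exp_im_of_upperHalfPlane hf
      (fun w hw => by simpa [abs_of_nonneg hw] using hA w) hM hz
  · rw [abs_of_nonpos hz]
    simpa using norm_le_mul_exp_im_of_upperHalfPlane (f := fun w => f (-w)) (z := -z)
      (hf.comp differentiable_neg) (fun w hw => by simpa [abs_of_nonneg hw] using hA (-w))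
      (fun t => by simpa using hM (-t)) (by simpa using hz)

end Growth

section Entire

variable {E : Type*} [NormedAddCommGroup E] [NormedSpace ℂ E] [CompleteSpace E]

theorem iteratedDeriv_comp_ofReal {f : ℂ → E} (hf : Differentiable ℂ f) (n : ℕ) :
    iteratedDeriv n (fun t : ℝ => f t) = fun t : ℝ => iteratedDeriv n f t := by
  induction n with
  | zero => rfl
  | succ n ih =>
    have hd := (hf.contDiff (n := ⊤)).differentiable_iteratedDeriv n (WithTop.coe_lt_top _)
    ext t
    rw [iteratedDeriv_succ, ih, iteratedDeriv_succ]
    simpa [Function.comp_def] using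
      ((hd t).hasDerivAt.scomp t (hasDerivAt_id t).ofReal_comp).deriv

theorem contDiff_comp_ofReal {f : ℂ → E} (hf : Differentiable ℂ f) (n : WithTop ℕ∞) :
    ContDiff ℝ n (fun t : ℝ => f t) :=
  (hf.contDiff.restrict_scalars ℝ).comp Complex.ofRealCLM.contDiff

-- Cauchy's estimate on the circle of radius `n / Ω` around `t`, together with `n! ≤ n ^ n`.
theorem norm_iteratedDeriv_le_of_norm_le_mul_exp_abs_im {f : ℂ → E} (hf : Differentiable ℂ f)
    {M Ω : ℝ} (hΩ : 0 < Ω) (hM : ∀ z : ℂ, ‖f z‖ ≤ M * Real.exp (Ω * |z.im|)) (n : ℕ) (t : ℝ) :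
    ‖iteratedDeriv n f t‖ ≤ (Ω * Real.exp 1) ^ n * M := by
  rcases n.eq_zero_or_pos with rfl | hn
  · simpa using hM t
  have hM0 : 0 ≤ M := by simpa using (norm_nonneg _).trans (hM 0)
  set r : ℝ := n / Ω
  have hr : 0 < r := by positivity
  have hsphere : ∀ z ∈ Metric.sphere (t : ℂ) r, ‖f z‖ ≤ M * Real.exp n := fun z hz => by
    have him : |z.im| ≤ r := by
      simpa [← mem_sphere_iff_norm.1 hz] using Complex.abs_im_le_norm (z - t)
    calc ‖f z‖ ≤ M * Real.exp (Ω * |z.im|) := hM z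
      _ ≤ M * Real.exp (Ω * r) := by gcongr
      _ = M * Real.exp n := by rw [mul_div_cancel₀ _ hΩ.ne']
  calc ‖iteratedDeriv n f t‖ ≤ n.factorial * (M * Real.exp n) / r ^ n :=
        Complex.norm_iteratedDeriv_le_of_forall_mem_sphere_norm_le n hr hf.diffContOnCl hsphere
    _ ≤ (n : ℝ) ^ n * (M * Real.exp n) / r ^ n := by
        gcongr; exact_mod_cast n.factorial_le_pow
    _ = (Ω * Real.exp 1) ^ n * M := by
        have : (n : ℝ) ≠ 0 := by positivity
        rw [← Real.exp_one_pow, div_pow]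
        field_simp
        ring

end Entire

theorem fdiff_iter_comp_mul_eq (g : ℝ → ℝ) (T : ℝ) (N : ℕ) (k : ℤ) :
    fdiff^[N] (fun m : ℤ => g (m * T)) k = (fwdDiff T)^[N] g (k * T) := by
  show (fwdDiff 1)^[N] _ k = _
  simpa [Function.comp_def] using
    fwdDiff_iter_comp_addMonoidHom ((AddMonoidHom.mulRight T).comp (Int.castAddHom ℝ)) g 1 N k

theorem stmt11 (Ω T : ℝ) (hΩ : 0 < Ω) (hT : 0 < T) (N : ℕ)
    (g : ℝ → ℝ) (hg : IsPW Ω g) :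
    (⨆ k : ℤ, |fdiff^[N] (fun m : ℤ => g (m * T)) k|) ≤
      (T * Ω * Real.exp 1) ^ N * ⨆ t : ℝ, |g t| := by
  obtain ⟨φ, hφ, hrep⟩ := hg
  set μ := volume.restrict (Set.Icc (-Ω) Ω)
  set G := fourierExtension μ φ
  set M := ⨆ t : ℝ, |g t|
  have hsupp : ∀ᵐ ω ∂μ, |ω| ≤ Ω := (ae_restrict_mem measurableSet_Icc).mono fun ω => abs_le.2
  have hG : Differentiable ℂ G := differentiable_fourierExtension (hφ.integrable one_le_two) hsupp
  have hGA := norm_fourierExtension_le (hφ.integrable one_le_two) hsupp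
  have hgG : ((Complex.ofRealHom : ℝ →+* ℂ) : ℝ →+ ℂ) ∘ g = fun t : ℝ => G t := funext hrep
  have hnorm : ∀ t : ℝ, |g t| = ‖G t‖ := fun t => by
    rw [← Real.norm_eq_abs, ← Complex.norm_real, hrep]; rfl
  have hbdd : BddAbove (Set.range fun t => |g t|) :=
    ⟨∫ ω, ‖φ ω‖ ∂μ, Set.forall_mem_range.2 fun t =>
      (hnorm t).trans_le ((hGA t).trans_eq (by simp))⟩
  have hGM : ∀ t : ℝ, ‖G t‖ ≤ M := fun t => (hnorm t).symm.trans_le (le_ciSup hbdd t)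
  have hDN : ∀ t : ℝ, ‖iteratedDeriv N (fun s : ℝ => G s) t‖ ≤ (Ω * Real.exp 1) ^ N * M := by
    rw [iteratedDeriv_comp_ofReal hG]
    exact norm_iteratedDeriv_le_of_norm_le_mul_exp_abs_im hG hΩ
      (norm_le_mul_exp_abs_im hG hGA hGM) N
  refine ciSup_le fun k => ?_
  calc |fdiff^[N] (fun m : ℤ => g (m * T)) k|
      = ‖(fwdDiff T)^[N] (fun s : ℝ => G s) (k * T)‖ := by
        rw [fdiff_iter_comp_mul_eq, ← hgG, fwdDiff_iter_addMonoidHom_comp]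
        simp
    _ ≤ T ^ N * ((Ω * Real.exp 1) ^ N * M) :=
        norm_fwdDiff_iter_le_of_norm_iteratedDeriv_le hT.le (contDiff_comp_ofReal hG N) hDN _
    _ = (T * Ω * Real.exp 1) ^ N * M := by ring
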